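/- Let k ≥ 2, let c > 0, and let g : [0,∞)^k → ℝ be a smooth function supported on the simplex Δ_k(c). Then ∫_{Δ_k(c)} t_2 · ( ∂^{k+1} g(t_1, ..., t_k) / ∂t_1 (∂t_2)^2 ∂t_3 ··· ∂t_k )^2 dt_1 ··· dt_k ≥ ∫_{Δ_{k-1}(c)} ( t_2 / (c − t_2 − ··· − t_k) ) · ( ∂^k g(0, t_2, ..., t_k) / (∂t_2)^2 ∂t_3 ··· ∂t_k )^2 dt_2 ··· dt_k, where the integrand on the right is interpreted as 0 when t_2 + ··· + t_k = c. -/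

import Mathlib

open MeasureTheory

/-- The simplex `Δ_k(y) = {t ∈ [0,∞)^k : t 0 + ... + t (k-1) ≤ y}`. -/
def simplexSet (k : ℕ) (y : ℝ) : Set (Fin k → ℝ) :=
  {t | (∀ i, 0 ≤ t i) ∧ (∑ i, t i) ≤ y}

/-- Partial derivative of `g : ℝ^n → ℝ` in the `i`-th coordinate direction. -/
noncomputable def pd {n : ℕ} (i : Fin n) (g : (Fin n → ℝ) → ℝ) : (Fin n → ℝ) → ℝ :=
  fun x => fderiv ℝ g x (Pi.single i 1)

/-- Iterated mixed partial derivative along a list of coordinate directions. -/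
noncomputable def mderiv {n : ℕ} (l : List (Fin n)) (g : (Fin n → ℝ) → ℝ) :
    (Fin n → ℝ) → ℝ :=
  l.foldr pd g

lemma contDiff_pd {n : ℕ} (i : Fin n) {g : (Fin n → ℝ) → ℝ} (hg : ContDiff ℝ (⊤ : ℕ∞) g) :
    ContDiff ℝ (⊤ : ℕ∞) (pd i g) :=
  (hg.fderiv_right (by simp)).clm_apply contDiff_const

lemma contDiff_mderiv {n : ℕ} (l : List (Fin n)) {g : (Fin n → ℝ) → ℝ} (hg : ContDiff ℝ (⊤ : ℕ∞) g) :
    ContDiff ℝ (⊤ : ℕ∞) (mderiv l g) := by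
  induction l with
  | nil => exact hg
  | cons i l ih => exact contDiff_pd i ih

lemma pd_eqOn_zero {n : ℕ} {U : Set (Fin n → ℝ)} (hU : IsOpen U) {g : (Fin n → ℝ) → ℝ}
    (h : Set.EqOn g 0 U) (i : Fin n) : Set.EqOn (pd i g) 0 U := by
  intro x hx
  have : fderiv ℝ g x = fderiv ℝ (0 : (Fin n → ℝ) → ℝ) x :=
    Filter.EventuallyEq.fderiv_eq (Filter.eventuallyEq_of_mem (hU.mem_nhds hx) h)
  have h0 : fderiv ℝ (0 : (Fin n → ℝ) → ℝ) x = 0 := fderiv_const_apply 0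
  simp [pd, this, h0]

lemma mderiv_eqOn_zero {n : ℕ} {U : Set (Fin n → ℝ)} (hU : IsOpen U) {g : (Fin n → ℝ) → ℝ}
    (h : Set.EqOn g 0 U) (l : List (Fin n)) : Set.EqOn (mderiv l g) 0 U := by
  induction l with
  | nil => exact h
  | cons i l ih => exact pd_eqOn_zero hU ih i

/-- second derivative symmetry for pd -/
lemma pd_comm {n : ℕ} {g : (Fin n → ℝ) → ℝ} (hg : ContDiff ℝ (⊤ : ℕ∞) g) (i j : Fin n) :
    pd i (pd j g) = pd j (pd i g) := by
  funext x
  have hdiff : ∀ y, HasFDerivAt g (fderiv ℝ g y) y := fun y =>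
    (hg.differentiable (by simp) y).hasFDerivAt
  have h1 : ContDiff ℝ (⊤ : ℕ∞) (fderiv ℝ g) := hg.fderiv_right (by simp)
  have hx : HasFDerivAt (fderiv ℝ g) (fderiv ℝ (fderiv ℝ g) x) x :=
    (h1.differentiable (by simp) x).hasFDerivAt
  have key : ∀ v w : Fin n → ℝ,
      fderiv ℝ (fun y => fderiv ℝ g y v) x w = fderiv ℝ (fderiv ℝ g) x w v := by
    intro v w
    rw [fderiv_clm_apply (h1.differentiable (by simp) x) (differentiableAt_const v)]
    simp
  have hsym := second_derivative_symmetric hdiff hx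
  show fderiv ℝ (fun y => fderiv ℝ g y (Pi.single j 1)) x (Pi.single i 1)
      = fderiv ℝ (fun y => fderiv ℝ g y (Pi.single i 1)) x (Pi.single j 1)
  rw [key, key, hsym]

lemma closure_vanish {n : ℕ} (hn : 0 < n) (c : ℝ) {f : (Fin n → ℝ) → ℝ} (hf : Continuous f)
    (h : ∀ t : Fin n → ℝ, (∀ i, 0 < t i) → c < ∑ i, t i → f t = 0)
    (x : Fin n → ℝ) (hx : ∀ i, 0 ≤ x i) (hsum : c ≤ ∑ i, x i) : f x = 0 := by
  have hcont : Continuous fun ε : ℝ => f (fun i => x i + ε) := by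
    apply hf.comp
    exact continuous_pi fun i => continuous_const.add continuous_id
  have lim : Filter.Tendsto (fun ε : ℝ => f (fun i => x i + ε))
      (nhdsWithin 0 (Set.Ioi 0)) (nhds (f x)) := by
    have := hcont.tendsto 0
    simp only [add_zero] at this
    exact this.mono_left nhdsWithin_le_nhds
  have ev : ∀ᶠ ε in nhdsWithin (0:ℝ) (Set.Ioi 0), f (fun i => x i + ε) = 0 := by
    filter_upwards [self_mem_nhdsWithin] with ε hε
    have hε' : (0:ℝ) < ε := hε
    apply h
    · intro i; exact add_pos_of_nonneg_of_pos (hx i) hε'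
    · have hs : ∑ i, (x i + ε) = (∑ i, x i) + n * ε := by
        rw [Finset.sum_add_distrib]
        simp [mul_comm]
      rw [hs]
      have : 0 < (n:ℝ) * ε := by positivity
      linarith
  have lim0 : Filter.Tendsto (fun ε : ℝ => f (fun i => x i + ε))
      (nhdsWithin 0 (Set.Ioi 0)) (nhds 0) :=
    Filter.Tendsto.congr' (Filter.EventuallyEq.symm ev) tendsto_const_nhds
  exact tendsto_nhds_unique lim lim0

lemma isClosed_simplexSet (k : ℕ) (y : ℝ) : IsClosed (simplexSet k y) := by
  have : simplexSet k y = (⋂ i, {t : Fin k → ℝ | 0 ≤ t i}) ∩ {t | ∑ i, t i ≤ y} := by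
    ext t; simp [simplexSet, Set.mem_iInter]
  rw [this]
  exact (isClosed_iInter fun i => isClosed_le continuous_const (continuous_apply i)).inter
    (isClosed_le (by continuity) continuous_const)

lemma isCompact_simplexSet (k : ℕ) {y : ℝ} (hy : 0 ≤ y) : IsCompact (simplexSet k y) := by
  refine IsCompact.of_isClosed_subset (isCompact_Icc (a := (0 : Fin k → ℝ)) (b := fun _ => y))
    (isClosed_simplexSet k y) ?_
  rintro t ⟨h1, h2⟩
  constructor
  · intro i; exact h1 i
  · intro i
    calc t i ≤ ∑ j, t j := Finset.single_le_sum (fun j _ => h1 j) (Finset.mem_univ i)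
    _ ≤ y := h2

lemma sq_intervalIntegral_le {a : ℝ} (ha : 0 < a) {f : ℝ → ℝ} (hf : Continuous f) :
    (∫ x in (0:ℝ)..a, f x) ^ 2 ≤ a * ∫ x in (0:ℝ)..a, (f x) ^ 2 := by
  set I := ∫ x in (0:ℝ)..a, f x with hI
  set b := I / a with hbdef
  have hint : IntervalIntegrable f volume 0 a := hf.intervalIntegrable 0 a
  have hint2 : IntervalIntegrable (fun x => f x ^ 2) volume 0 a :=
    (hf.pow 2).intervalIntegrable 0 a
  have hnn : 0 ≤ ∫ x in (0:ℝ)..a, (f x - b)^2 :=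
    intervalIntegral.integral_nonneg ha.le (fun x _ => sq_nonneg _)
  have hexp : (∫ x in (0:ℝ)..a, (f x - b)^2)
      = (∫ x in (0:ℝ)..a, f x ^ 2) - 2*b*I + a*b^2 := by
    have heq : ∀ x : ℝ, (f x - b)^2 = f x ^2 - (2*b) * f x + b^2 := by intro x; ring
    simp_rw [heq]
    rw [intervalIntegral.integral_add (hint2.sub (hint.const_mul (2*b)))
      intervalIntegrable_const,
      intervalIntegral.integral_sub hint2 (hint.const_mul (2*b)),
      intervalIntegral.integral_const_mul, intervalIntegral.integral_const]
    simp only [smul_eq_mul, sub_zero, ← hI]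
    try ring
  rw [hexp] at hnn
  have hb : 2*b*I - a*b^2 = I^2/a := by
    rw [hbdef]; field_simp; ring
  have : I^2/a ≤ ∫ x in (0:ℝ)..a, f x ^ 2 := by linarith
  calc I^2 = (I^2/a) * a := by field_simp
  _ ≤ (∫ x in (0:ℝ)..a, f x ^ 2) * a := mul_le_mul_of_nonneg_right this ha.le
  _ = a * ∫ x in (0:ℝ)..a, f x ^ 2 := mul_comm _ _

/-- Tao's lower bound in dimension `k = m + 2 ≥ 2`: for a smooth `g : [0,∞)^k → ℝ`
supported on `Δ_k(c)`,
`∫_{Δ_k(c)} t₂ (∂^{k+1} g/∂t₁ (∂t₂)² ∂t₃ ⋯ ∂t_k)² ≥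
 ∫_{Δ_{k-1}(c)} (t₂/(c - t₂ - ⋯ - t_k)) (∂^k g(0,t₂,…,t_k)/(∂t₂)² ∂t₃ ⋯ ∂t_k)²`.
(Coordinates `t₁, …, t_k` are indexed by `0, …, k-1`; the convention that the right-hand
integrand vanishes when `t₂ + ⋯ + t_k = c` is automatic since in Lean `x/0 = 0`.) -/
theorem tao_square_integral_lower_bound_general (m : ℕ) (c : ℝ) (hc : 0 < c)
    (g : (Fin (m + 2) → ℝ) → ℝ) (hg : ContDiff ℝ (⊤ : ℕ∞) g)
    (hsupp : ∀ t : Fin (m + 2) → ℝ, (∀ i, 0 ≤ t i) → ¬ (∑ i, t i) ≤ c → g t = 0) :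
    (∫ t in simplexSet (m + 2) c,
        t 1 * (pd 1 (mderiv (List.finRange (m + 2)) g) t) ^ 2) ≥
      ∫ s in simplexSet (m + 1) c,
        (s 0 / (c - ∑ i, s i)) *
          (pd 1 (mderiv (List.finRange (m + 2)).tail g) (Fin.cons 0 s)) ^ 2 := by
  -- notation
  set h : (Fin (m + 2) → ℝ) → ℝ := mderiv (List.finRange (m + 2)).tail g with hh
  have hhsmooth : ContDiff ℝ (⊤ : ℕ∞) h := contDiff_mderiv _ hg
  set G : (Fin (m + 2) → ℝ) → ℝ := pd 1 h with hG
  have hGsmooth : ContDiff ℝ (⊤ : ℕ∞) G := contDiff_pd _ hhsmooth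
  set D : (Fin (m + 2) → ℝ) → ℝ := pd 0 G with hD
  have hDsmooth : ContDiff ℝ (⊤ : ℕ∞) D := contDiff_pd _ hGsmooth
  -- the full mixed derivative splits off pd 0
  have e1 : List.finRange (m + 2) = (0 : Fin (m + 2)) :: (List.finRange (m + 2)).tail := by
    rw [List.finRange_succ]
    rfl
  have hfull : pd 1 (mderiv (List.finRange (m + 2)) g) = D := by
    rw [e1]
    show pd 1 (pd 0 h) = pd 0 (pd 1 h)
    exact pd_comm hhsmooth 1 0
  -- support of G
  have hUopen : IsOpen {t : Fin (m + 2) → ℝ | (∀ i, 0 < t i) ∧ c < ∑ i, t i} := by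
    have h1 : IsOpen {t : Fin (m + 2) → ℝ | ∀ i, 0 < t i} := by
      have : {t : Fin (m + 2) → ℝ | ∀ i, 0 < t i} = ⋂ i, {t | 0 < t i} := by
        ext t; simp [Set.mem_iInter]
      rw [this]
      exact isOpen_iInter_of_finite fun i => isOpen_lt continuous_const (continuous_apply i)
    exact h1.inter (isOpen_lt continuous_const (continuous_finset_sum _ fun i _ => continuous_apply i))
  have hgU : Set.EqOn g 0 {t : Fin (m + 2) → ℝ | (∀ i, 0 < t i) ∧ c < ∑ i, t i} := by
    intro t ht
    exact hsupp t (fun i => (ht.1 i).le) (not_le.mpr ht.2)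
  have hGU : Set.EqOn G 0 {t : Fin (m + 2) → ℝ | (∀ i, 0 < t i) ∧ c < ∑ i, t i} := by
    have : G = mderiv (1 :: (List.finRange (m + 2)).tail) g := rfl
    rw [this]
    exact mderiv_eqOn_zero hUopen hgU _
  have hGzero : ∀ x : Fin (m + 2) → ℝ, (∀ i, 0 ≤ x i) → c ≤ ∑ i, x i → G x = 0 := by
    refine closure_vanish (by omega) c (hGsmooth.continuous) ?_
    exact fun t h1 h2 => hGU ⟨h1, h2⟩
  -- product space setup
  set E : Set (ℝ × (Fin (m + 1) → ℝ)) :=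
    {p | 0 ≤ p.1 ∧ (∀ i, 0 ≤ p.2 i) ∧ p.1 + ∑ i, p.2 i ≤ c} with hE
  set F : ℝ × (Fin (m + 1) → ℝ) → ℝ := fun p => p.2 0 * (D (Fin.cons p.1 p.2)) ^ 2 with hF
  have hconsc : Continuous fun p : ℝ × (Fin (m + 1) → ℝ) =>
      (Fin.cons p.1 p.2 : Fin (m + 2) → ℝ) := by
    refine continuous_pi fun i => ?_
    refine Fin.cases ?_ (fun j => ?_) i
    · exact continuous_fst
    · exact (continuous_apply j).comp continuous_snd
  have hFcont : Continuous F := ((continuous_apply 0).comp continuous_snd).mul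
    (((hDsmooth.continuous).comp hconsc).pow 2)
  have hEclosed : IsClosed E := by
    have h1 : IsClosed {p : ℝ × (Fin (m + 1) → ℝ) | 0 ≤ p.1} :=
      isClosed_le continuous_const continuous_fst
    have h2 : IsClosed {p : ℝ × (Fin (m + 1) → ℝ) | ∀ i, 0 ≤ p.2 i} := by
      have heq : {p : ℝ × (Fin (m + 1) → ℝ) | ∀ i, 0 ≤ p.2 i} = ⋂ i, {p | 0 ≤ p.2 i} := by
        ext p; simp [Set.mem_iInter]
      rw [heq]
      exact isClosed_iInter fun i =>
        isClosed_le continuous_const ((continuous_apply i).comp continuous_snd)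
    have h3 : IsClosed {p : ℝ × (Fin (m + 1) → ℝ) | p.1 + ∑ i, p.2 i ≤ c} :=
      isClosed_le (continuous_fst.add
        (continuous_finset_sum _ fun i _ => (continuous_apply i).comp continuous_snd))
        continuous_const
    exact h1.inter (h2.inter h3)
  have hEm : MeasurableSet E := hEclosed.measurableSet
  have hEcompact : IsCompact E := by
    refine IsCompact.of_isClosed_subset ((isCompact_Icc (a := (0:ℝ)) (b := c)).prod
      (isCompact_Icc (a := (0 : Fin (m + 1) → ℝ)) (b := fun _ => c))) hEclosed ?_
    rintro ⟨x, s⟩ ⟨hx, hs, hsum⟩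
    have hsnn : 0 ≤ ∑ i, s i := Finset.sum_nonneg fun i _ => hs i
    refine ⟨⟨hx, by linarith⟩, ⟨fun i => hs i, fun i => ?_⟩⟩
    have h1 : s i ≤ ∑ j, s j := Finset.single_le_sum (fun j _ => hs j) (Finset.mem_univ i)
    linarith
  have hFE : IntegrableOn F E := hFcont.continuousOn.integrableOn_compact hEcompact
  have hind : Integrable (Set.indicator E F) := (integrable_indicator_iff hEm).mpr hFE
  set e : (Fin (m + 2) → ℝ) ≃ᵐ ℝ × (Fin (m + 1) → ℝ) :=
    MeasurableEquiv.piFinSuccAbove (fun _ : Fin (m + 2) => ℝ) 0 with he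
  have hmp : MeasurePreserving e volume volume :=
    volume_preserving_piFinSuccAbove (fun _ : Fin (m + 2) => ℝ) 0
  have hcompind : ∀ t : Fin (m + 2) → ℝ,
      Set.indicator E F (e t)
        = Set.indicator (simplexSet (m + 2) c) (fun t => t 1 * D t ^ 2) t := by
    intro t
    have het : e t = (t 0, fun j => t j.succ) := rfl
    have hmem : e t ∈ E ↔ t ∈ simplexSet (m + 2) c := by
      rw [het]
      simp only [hE, Set.mem_setOf_eq, simplexSet, Fin.sum_univ_succ]
      constructor
      · rintro ⟨h0, hsucc, hsum⟩; exact ⟨fun i => Fin.cases h0 hsucc i, hsum⟩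
      · rintro ⟨hall, hsum⟩; exact ⟨hall 0, fun i => hall i.succ, hsum⟩
    have hval : F (e t) = t 1 * D t ^ 2 := by
      rw [het]
      show t (0 : Fin (m + 1)).succ * (D (Fin.cons (t 0) (Fin.tail t))) ^ 2 = t 1 * D t ^ 2
      rw [Fin.cons_self_tail]
      rfl
    by_cases ht : t ∈ simplexSet (m + 2) c
    · rw [Set.indicator_of_mem (hmem.mpr ht), Set.indicator_of_mem ht, hval]
    · rw [Set.indicator_of_notMem (fun hh => ht (hmem.mp hh)), Set.indicator_of_notMem ht]
  have hLHSprod : (∫ t in simplexSet (m + 2) c, t 1 * D t ^ 2) = ∫ p in E, F p := by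
    rw [← integral_indicator (isClosed_simplexSet _ _).measurableSet, ← integral_indicator hEm]
    rw [← hmp.integral_comp' (Set.indicator E F)]
    exact integral_congr_ae (Filter.EventuallyEq.of_eq (funext fun t => (hcompind t).symm))
  set ψ : (Fin (m + 1) → ℝ) → ℝ := fun s => ∫ x : ℝ, Set.indicator E F (x, s) with hψ
  have hvol : (volume : Measure (ℝ × (Fin (m + 1) → ℝ)))
      = (volume : Measure ℝ).prod (volume : Measure (Fin (m + 1) → ℝ)) := rfl
  have hFub : (∫ p in E, F p) = ∫ s, ψ s := by
    rw [← integral_indicator hEm]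
    exact integral_prod_symm _ hind
  have hψint : Integrable ψ := hind.integral_prod_right
  have hψnn : ∀ s, 0 ≤ ψ s := fun s =>
    integral_nonneg fun x =>
      Set.indicator_nonneg (fun p hp => mul_nonneg (hp.2.1 0) (sq_nonneg _)) _
  set φ : (Fin (m + 1) → ℝ) → ℝ := fun s =>
    (s 0 / (c - ∑ i, s i)) * (G (Fin.cons 0 s)) ^ 2 with hφdef
  have key : ∀ s ∈ simplexSet (m + 1) c, φ s ≤ ψ s := by
    rintro s ⟨hs1, hs2⟩
    set a := c - ∑ i, s i with hadef
    have ha0 : 0 ≤ a := by rw [hadef]; linarith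
    set q : ℝ → ℝ := fun x => D (Fin.cons x s) with hq
    have hqcont : Continuous q := (hDsmooth.continuous).comp
      (continuous_pi fun i => Fin.cases continuous_id (fun j => continuous_const) i)
    have hψs : ψ s = s 0 * ∫ x in (0:ℝ)..a, q x ^ 2 := by
      have hindeq : (fun x : ℝ => Set.indicator E F (x, s))
          = Set.indicator (Set.Icc 0 a) (fun x => s 0 * q x ^ 2) := by
        funext x
        by_cases hx : x ∈ Set.Icc 0 a
        · have hmem : (x, s) ∈ E := ⟨hx.1, hs1, by
            have h2 := hx.2; rw [hadef] at h2; linarith⟩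
          rw [Set.indicator_of_mem hmem, Set.indicator_of_mem hx]
        · have hmem : (x, s) ∉ E := by
            intro hmem
            refine hx ⟨hmem.1, ?_⟩
            have h2 := hmem.2.2; rw [hadef]; linarith
          rw [Set.indicator_of_notMem hmem, Set.indicator_of_notMem hx]
      show (∫ x : ℝ, Set.indicator E F (x, s)) = _
      rw [hindeq, integral_indicator measurableSet_Icc,
        MeasureTheory.integral_Icc_eq_integral_Ioc,
        ← intervalIntegral.integral_of_le ha0, intervalIntegral.integral_const_mul]
    by_cases hac : a = 0
    · have hφ0 : φ s = 0 := by
        show s 0 / a * G (Fin.cons 0 s) ^ 2 = 0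
        rw [hac, div_zero, zero_mul]
      rw [hφ0]; exact hψnn s
    · have hapos : 0 < a := lt_of_le_of_ne ha0 (Ne.symm hac)
      have hGdiff : Differentiable ℝ G := hGsmooth.differentiable (by simp)
      have hQder : ∀ x : ℝ, HasDerivAt (fun y => G (Fin.cons y s)) (q x) x := by
        intro x
        have hrepr : (fun y : ℝ => (Fin.cons y s : Fin (m + 2) → ℝ))
            = fun y => ((Fin.cons 0 s : Fin (m + 2) → ℝ) + y • (Pi.single (0 : Fin (m + 2)) 1)) := by
          funext y i
          refine Fin.cases ?_ (fun j => ?_) i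
          · simp
          · simp [Pi.single_eq_of_ne (Fin.succ_ne_zero j)]
        have hι : HasDerivAt (fun y : ℝ => (Fin.cons y s : Fin (m + 2) → ℝ))
            (Pi.single (0 : Fin (m + 2)) 1) x := by
          rw [hrepr]
          simpa using (((hasDerivAt_id x).smul_const
            (Pi.single (0 : Fin (m + 2)) (1:ℝ)))).const_add (Fin.cons 0 s : Fin (m + 2) → ℝ)
        exact (hGdiff (Fin.cons x s)).hasFDerivAt.comp_hasDerivAt x hι
      have hQa : G (Fin.cons a s) = 0 := by
        apply hGzero
        · intro i
          refine Fin.cases ?_ (fun j => ?_) i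
          · exact ha0
          · exact hs1 j
        · rw [Fin.sum_cons, hadef]; linarith
      have hFTC : (∫ x in (0:ℝ)..a, q x) = - G (Fin.cons 0 s) := by
        rw [intervalIntegral.integral_eq_sub_of_hasDerivAt
          (fun x _ => hQder x) (hqcont.intervalIntegrable 0 a), hQa]
        ring
      have hCS : (G (Fin.cons 0 s)) ^ 2 ≤ a * ∫ x in (0:ℝ)..a, q x ^ 2 := by
        have h1 := sq_intervalIntegral_le hapos hqcont
        rw [hFTC] at h1
        simpa [neg_sq] using h1
      have hs00 : 0 ≤ s 0 := hs1 0
      have hφeq : φ s = (s 0 / a) * (G (Fin.cons 0 s)) ^ 2 := rfl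
      rw [hφeq, hψs]
      calc (s 0 / a) * (G (Fin.cons 0 s)) ^ 2
          ≤ (s 0 / a) * (a * ∫ x in (0:ℝ)..a, q x ^ 2) :=
            mul_le_mul_of_nonneg_left hCS (div_nonneg hs00 ha0)
        _ = s 0 * ∫ x in (0:ℝ)..a, q x ^ 2 := by
            field_simp
  have hgoal : (∫ t in simplexSet (m + 2) c,
      t 1 * (pd 1 (mderiv (List.finRange (m + 2)) g) t) ^ 2) = ∫ s, ψ s := by
    calc (∫ t in simplexSet (m + 2) c, t 1 * (pd 1 (mderiv (List.finRange (m + 2)) g) t) ^ 2)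
        = ∫ t in simplexSet (m + 2) c, t 1 * D t ^ 2 := by rw [hfull]
      _ = ∫ p in E, F p := hLHSprod
      _ = ∫ s, ψ s := hFub
  rw [ge_iff_le]
  calc (∫ s in simplexSet (m + 1) c, φ s)
      ≤ ∫ s in simplexSet (m + 1) c, ψ s := by
        by_cases hφint : IntegrableOn φ (simplexSet (m + 1) c) volume
        · exact setIntegral_mono_on hφint hψint.integrableOn
            (isClosed_simplexSet _ _).measurableSet key
        · rw [integral_undef hφint]
          exact setIntegral_nonneg (isClosed_simplexSet _ _).measurableSet fun s _ => hψnn s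
    _ ≤ ∫ s, ψ s := setIntegral_le_integral hψint (Filter.Eventually.of_forall hψnn)
    _ = ∫ t in simplexSet (m + 2) c,
          t 1 * (pd 1 (mderiv (List.finRange (m + 2)) g) t) ^ 2 := hgoal.symm
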